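/- For any pairing and positive power allocation achieving the maximal rate, λ_{ℓ(l)} ≥ λ_{k(j)} for all pair indices l, j; that is, every 'strong' channel gain is at least every 'weak' channel gain. -/

import Mathlib

open Finset

/-- A valid OT-pairing of `2N` parallel channels with gains `lam`. -/
structure OTPairing (N : ℕ) (lam : Fin (2 * N) → ℝ) where
  strong : Fin N → Fin (2 * N)
  weak : Fin N → Fin (2 * N)
  inj_strong : Function.Injective strong
  inj_weak : Function.Injective weak
  disj : ∀ l j, strong l ≠ weak j
  cover : ∀ i : Fin (2 * N), (∃ l, strong l = i) ∨ (∃ l, weak l = i)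
  ord : ∀ l, lam (weak l) < lam (strong l)

/-- Rate of a pairing under power allocation `Pw`. -/
noncomputable def pairingRate {N : ℕ} {lam : Fin (2 * N) → ℝ}
    (pr : OTPairing N lam) (Pw : Fin N → ℝ) : ℝ :=
  ∑ l : Fin N, (Real.log (1 + Pw l * (lam (pr.strong l)) ^ 2)
                  - Real.log (1 + Pw l * (lam (pr.weak l)) ^ 2))

lemma Function.Injective.update_of_forall_ne {α β : Type*} [DecidableEq α] {f : α → β}
    (hf : Function.Injective f) {a : α} {b : β} (hb : ∀ x, f x ≠ b) :
    Function.Injective (Function.update f a b) := by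
  intro x y hxy
  simp only [Function.update_apply] at hxy
  split_ifs at hxy with hx hy hy
  · exact hx.trans hy.symm
  · exact absurd hxy.symm (hb y)
  · exact absurd hxy (hb x)
  · exact hf hxy

lemma Finset.sum_sub_sum_eq_of_eq_off_pair {ι M : Type*} [Fintype ι] [DecidableEq ι]
    [AddCommGroup M] {f g : ι → M} {a b : ι} (hab : a ≠ b)
    (hfg : ∀ i, i ≠ a → i ≠ b → f i = g i) :
    ∑ i, f i - ∑ i, g i = (f a - g a) + (f b - g b) := by
  rw [← sum_sub_distrib, ← sum_pair (f := fun i => f i - g i) hab]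
  refine (sum_subset (subset_univ _) fun i _ hi => ?_).symm
  simp only [mem_insert, mem_singleton, not_or] at hi
  rw [hfg i hi.1 hi.2, sub_self]

lemma Real.log_one_add_mul_sq_lt_log_one_add_mul_sq {P a b : ℝ} (hP : 0 < P) (ha : 0 < a)
    (hab : a < b) : Real.log (1 + P * a ^ 2) < Real.log (1 + P * b ^ 2) := by
  have : a ^ 2 < b ^ 2 := pow_lt_pow_left₀ hab ha.le two_ne_zero
  exact Real.log_lt_log (by positivity) (by gcongr)

namespace OTPairing

variable {N : ℕ} {lam : Fin (2 * N) → ℝ}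

lemma ne_of_lt_weak (pr : OTPairing N lam) {l j : Fin N}
    (h : lam (pr.strong l) < lam (pr.weak j)) : l ≠ j := by
  rintro rfl
  exact (pr.ord l).not_gt h

def swap (pr : OTPairing N lam) {l j : Fin N} (h : lam (pr.strong l) < lam (pr.weak j)) :
    OTPairing N lam where
  strong := Function.update pr.strong l (pr.weak j)
  weak := Function.update pr.weak j (pr.strong l)
  inj_strong := pr.inj_strong.update_of_forall_ne fun x => pr.disj x j
  inj_weak := pr.inj_weak.update_of_forall_ne fun x hx => pr.disj l x hx.symm
  disj a b := by
    simp only [Function.update_apply]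
    split_ifs with ha hb hb
    · exact fun e => pr.disj l j e.symm
    · exact fun e => hb (pr.inj_weak e.symm)
    · exact fun e => ha (pr.inj_strong e)
    · exact pr.disj a b
  cover i := by
    rcases pr.cover i with ⟨a, rfl⟩ | ⟨a, rfl⟩
    · rcases eq_or_ne a l with rfl | hal
      · exact Or.inr ⟨j, by simp⟩
      · exact Or.inl ⟨a, by simp [hal]⟩
    · rcases eq_or_ne a j with rfl | haj
      · exact Or.inl ⟨l, by simp⟩
      · exact Or.inr ⟨a, by simp [haj]⟩
  ord i := by
    simp only [Function.update_apply]
    split_ifs with hj hl hl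
    · exact absurd (hl.symm.trans hj) (pr.ne_of_lt_weak h)
    · exact hj ▸ h.trans (pr.ord j)
    · exact hl ▸ (pr.ord l).trans h
    · exact pr.ord i

@[simp] lemma swap_strong (pr : OTPairing N lam) {l j : Fin N}
    (h : lam (pr.strong l) < lam (pr.weak j)) :
    (pr.swap h).strong = Function.update pr.strong l (pr.weak j) := rfl

@[simp] lemma swap_weak (pr : OTPairing N lam) {l j : Fin N}
    (h : lam (pr.strong l) < lam (pr.weak j)) :
    (pr.swap h).weak = Function.update pr.weak j (pr.strong l) := rfl

/-- The exchange only affects the pairs `l` and `j`, and both of their terms grow: pair `l` gets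
the better strong channel `weak j`, and pair `j` the worse weak channel `strong l`. -/
lemma pairingRate_lt_pairingRate_swap (hpos : ∀ i, 0 < lam i) (pr : OTPairing N lam)
    {Pw : Fin N → ℝ} (hPw : ∀ l, 0 < Pw l) {l j : Fin N}
    (h : lam (pr.strong l) < lam (pr.weak j)) :
    pairingRate pr Pw < pairingRate (pr.swap h) Pw := by
  have hlj := pr.ne_of_lt_weak h
  have hdiff := Finset.sum_sub_sum_eq_of_eq_off_pair (f := fun i =>
      Real.log (1 + Pw i * lam ((pr.swap h).strong i) ^ 2)
        - Real.log (1 + Pw i * lam ((pr.swap h).weak i) ^ 2))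
    (g := fun i => Real.log (1 + Pw i * lam (pr.strong i) ^ 2)
        - Real.log (1 + Pw i * lam (pr.weak i) ^ 2)) hlj
    fun i hil hij => by simp [hil, hij]
  simp only [swap_strong, swap_weak, Function.update_self, Function.update_of_ne hlj,
    Function.update_of_ne hlj.symm] at hdiff
  have hl := Real.log_one_add_mul_sq_lt_log_one_add_mul_sq (hPw l) (hpos _) h
  have hj := Real.log_one_add_mul_sq_lt_log_one_add_mul_sq (hPw j) (hpos _) h
  simp only [pairingRate, swap_strong, swap_weak]
  linarith

end OTPairing

theorem stmt7_general (N : ℕ) (lam : Fin (2 * N) → ℝ) (hpos : ∀ i, 0 < lam i)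
    (pr : OTPairing N lam) (Pw : Fin N → ℝ) (hPw : ∀ l, 0 < Pw l)
    (hopt : ∀ pr' : OTPairing N lam, pairingRate pr' Pw ≤ pairingRate pr Pw) :
    ∀ l j, lam (pr.weak j) ≤ lam (pr.strong l) := by
  intro l j
  by_contra! h
  exact (pr.pairingRate_lt_pairingRate_swap hpos hPw h).not_ge (hopt _)

/-- Lemma 3: if a pairing with positive powers is optimal (no repairing with
the same powers achieves a strictly larger rate), then every strong gain is
at least every weak gain: `λ_{ℓ(l)} ≥ λ_{k(j)}` for all `l, j`. -/
theorem stmt7 (N : ℕ) (lam : Fin (2 * N) → ℝ) (hpos : ∀ i, 0 < lam i)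
    (hdist : Function.Injective lam)
    (pr : OTPairing N lam) (Pw : Fin N → ℝ) (hPw : ∀ l, 0 < Pw l)
    (hopt : ∀ pr' : OTPairing N lam, pairingRate pr' Pw ≤ pairingRate pr Pw) :
    ∀ l j, lam (pr.weak j) ≤ lam (pr.strong l) :=
  stmt7_general N lam hpos pr Pw hPw hopt
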